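/- Let F be the free commutative groupoid on one generator x, i.e., the quotient of the free magma on one generator by the smallest multiplicative congruence containing all pairs (u*v, v*u) for terms u, v. Define powers in F by x¹ = x and xⁿ⁺¹ = x·xⁿ. Then for every even m ≥ 4, xᵐ ≠ (x·x)^{m/2} in F. Consequently F, a magma satisfying the commutative law, is not mAC-nice for any even m ≥ 4. -/

import Mathlib

/-- Bracketings: full binary trees in which every internal node has two children. -/
inductive Brack : Type
  | leaf : Brack
  | node : Brack → Brack → Brack

/-- Number of leaves of a bracketing. -/
def Brack.leaves : Brack → ℕ
  | .leaf => 1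
  | .node l r => l.leaves + r.leaves

/-- The `s`-product in a magma `G`: evaluate the bracketing `s`, labelling its leaves
from left to right by `a k, a (k+1), …`. -/
def Brack.eval {G : Type*} [Mul G] : Brack → (ℕ → G) → ℕ → G
  | .leaf, a, k => a k
  | .node l r, a, k => l.eval a k * r.eval a (k + l.leaves)

/-- Extend a permutation of `{0, …, n−1}` to `ℕ` (identity elsewhere). -/
def permNat {n : ℕ} (f : Equiv.Perm (Fin n)) (i : ℕ) : ℕ :=
  if h : i < n then (f ⟨i, h⟩ : ℕ) else i

/-- A magma `G` satisfies the linear identity `⟨s, t, f⟩` if for all `a₁, …, aₙ ∈ G`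
the `s`-product of `(a₁, …, aₙ)` equals the `t`-product of `(a_{f(1)}, …, a_{f(n)})`. -/
def Satisfies (G : Type*) [Mul G] {n : ℕ} (s t : Brack) (f : Equiv.Perm (Fin n)) : Prop :=
  ∀ a : ℕ → G, s.eval a 0 = t.eval (fun i => a (permNat f i)) 0

/-- A magma `G` is `m`AC-nice if any two products of the same `m` elements coincide:
for every `a`, all bracketings `s, t` with `m` leaves and all permutations `f, g`,
the `s`-product of `(a_{f(1)}, …, a_{f(m)})` equals the `t`-product of
`(a_{g(1)}, …, a_{g(m)})`. -/
def ACnice (G : Type*) [Mul G] (m : ℕ) : Prop :=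
  ∀ (a : ℕ → G) (s t : Brack), s.leaves = m → t.leaves = m →
    ∀ f g : Equiv.Perm (Fin m),
      s.eval (fun i => a (permNat f i)) 0 = t.eval (fun i => a (permNat g i)) 0

/-- Instances of the commutative law in the free magma on one generator. -/
def commRel (x y : FreeMagma Unit) : Prop :=
  ∃ u v : FreeMagma Unit, x = u * v ∧ y = v * u

/-- The free commutative groupoid on one generator. -/
abbrev FC := (conGen commRel).Quotient

/-- The generator `x` of `FC`. -/
def xg : FC := Quotient.mk (conGen commRel).toSetoid (FreeMagma.of ())

/-- Powers: `x¹ = x`, `xⁿ⁺¹ = x · xⁿ` (the value at `0` is junk). -/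
def pw {G : Type*} [Mul G] (x : G) : ℕ → G
  | 0 => x
  | 1 => x
  | k + 2 => x * pw x (k + 1)

/-!
Commutativity only swaps the two factors of a product, so the size of a term and the size of
the smaller of its two top-level factors survive the passage to the free commutative groupoid.
For `m ≥ 4` the smaller top factor of `xᵐ = x · xᵐ⁻¹` is `x`, of size `1`, while that of
`(x·x)^{m/2} = (x·x) · (x·x)^{m/2-1}` is `x·x`, of size `2`. An `m`AC-nice magma would identify
these two products of `m` copies of `x`.
-/

lemma pw_succ {G : Type*} [Mul G] (x : G) {n : ℕ} (hn : 1 ≤ n) : pw x (n + 1) = x * pw x n := by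
  obtain ⟨k, rfl⟩ := Nat.exists_eq_add_of_le' hn
  rfl

lemma map_pw {F G H : Type*} [Mul G] [Mul H] [FunLike F G H] [MulHomClass F G H] (f : F)
    (x : G) : ∀ n, f (pw x n) = pw (f x) n
  | 0 | 1 => rfl
  | k + 2 => by rw [pw, map_mul, map_pw f x (k + 1)]; rfl

def Con.liftMulHom {M N : Type*} [Mul M] [Mul N] (c : Con M) (f : M →ₙ* N) (h : c ≤ Con.ker f) :
    c.Quotient →ₙ* N where
  toFun q := Con.liftOn q f fun _ _ hab => h hab
  map_mul' p q := Con.induction_on₂ p q fun a b => map_mul f a b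

structure Shape where
  size : ℕ
  minFactor : ℕ

namespace Shape

instance : CommMagma Shape where
  mul a b := ⟨a.size + b.size, min a.size b.size⟩
  mul_comm a b := by
    change Shape.mk _ _ = Shape.mk _ _
    rw [Nat.add_comm, Nat.min_comm]

lemma size_mul (a b : Shape) : (a * b).size = a.size + b.size := rfl

lemma minFactor_mul (a b : Shape) : (a * b).minFactor = min a.size b.size := rfl

lemma size_pw (a : Shape) {n : ℕ} (hn : 1 ≤ n) : (pw a n).size = n * a.size := by
  induction n, hn using Nat.le_induction with
  | base => simp [pw]
  | succ n hn ih => rw [pw_succ a hn, size_mul, ih]; ring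

lemma minFactor_pw (a : Shape) {n : ℕ} (hn : 2 ≤ n) : (pw a n).minFactor = a.size := by
  obtain ⟨k, rfl⟩ := Nat.exists_eq_add_of_le' hn
  rw [pw_succ a (by omega), minFactor_mul, size_pw a (by omega)]
  exact min_eq_left (Nat.le_mul_of_pos_left _ (by omega))

end Shape

def FreeMagma.shape {α : Type*} : FreeMagma α →ₙ* Shape := FreeMagma.lift fun _ => ⟨1, 0⟩

lemma conGen_commRel_le_ker_shape : conGen commRel ≤ Con.ker FreeMagma.shape := by
  refine Con.conGen_le.2 ?_
  rintro _ _ ⟨u, v, rfl, rfl⟩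
  change FreeMagma.shape (u * v) = FreeMagma.shape (v * u)
  rw [map_mul, map_mul, mul_comm]

def FC.shape : FC →ₙ* Shape :=
  (conGen commRel).liftMulHom FreeMagma.shape conGen_commRel_le_ker_shape

lemma FC.shape_xg : FC.shape xg = ⟨1, 0⟩ := rfl

lemma pw_xg_ne_pw_xg_mul_xg {r : ℕ} (hr : 2 ≤ r) : pw xg (2 * r) ≠ pw (xg * xg) r := by
  intro h
  have h' := congrArg (fun q => (FC.shape q).minFactor) h
  simp only [map_pw, map_mul, FC.shape_xg] at h'
  rw [Shape.minFactor_pw _ (by omega), Shape.minFactor_pw _ hr, Shape.size_mul] at h'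
  exact absurd h' (by decide)

namespace Brack

lemma eval_const_shift {G : Type*} [Mul G] (x : G) (s : Brack) (k : ℕ) :
    s.eval (fun _ => x) k = s.eval (fun _ => x) 0 := by
  induction s generalizing k with
  | leaf => rfl
  | node l r ihl ihr => simp only [eval, ihl k, ihr (k + l.leaves), ihr (0 + l.leaves)]

/-- The right comb `b (b (⋯ (b b)))` of `n` copies of `b`, for `n ≥ 1`. -/
def rightComb (b : Brack) : ℕ → Brack
  | 0 | 1 => b
  | k + 2 => .node b (rightComb b (k + 1))

lemma leaves_rightComb (b : Brack) {n : ℕ} (hn : 1 ≤ n) :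
    (b.rightComb n).leaves = n * b.leaves := by
  induction n, hn using Nat.le_induction with
  | base => simp [rightComb]
  | succ n hn ih =>
    obtain ⟨k, rfl⟩ := Nat.exists_eq_add_of_le' hn
    rw [rightComb, leaves, ih]; ring

lemma eval_rightComb_const {G : Type*} [Mul G] (x : G) (b : Brack) :
    ∀ n k, (b.rightComb n).eval (fun _ => x) k = pw (b.eval (fun _ => x) 0) n
  | 0, k | 1, k => eval_const_shift x b k
  | n + 2, k => by
    rw [rightComb, eval, eval_const_shift x b, eval_rightComb_const x b (n + 1)]; rfl

end Brack

lemma ACnice.pw_eq_pw_mul_self {G : Type*} [Mul G] {r : ℕ} (hr : 1 ≤ r)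
    (h : ACnice G (2 * r)) (x : G) : pw x (2 * r) = pw (x * x) r := by
  have := h (fun _ => x) (Brack.leaf.rightComb (2 * r)) ((Brack.leaf.node .leaf).rightComb r)
    (by rw [Brack.leaves_rightComb _ (by omega), Brack.leaves, mul_one])
    (by rw [Brack.leaves_rightComb _ hr, Brack.leaves, Brack.leaves, mul_comm]) 1 1
  rwa [Brack.eval_rightComb_const, Brack.eval_rightComb_const] at this

/-- Lemma 5.3: in the free commutative groupoid on one generator `x`, for every even
`m ≥ 4` one has `xᵐ ≠ (x·x)^{m/2}`; consequently the free commutative groupoid is not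
`m`AC-nice for any even `m ≥ 4` (so the commutative law is not ultimately AC-nice). -/
theorem stmt9 :
    (∀ m : ℕ, 4 ≤ m → Even m → pw xg m ≠ pw (xg * xg) (m / 2)) ∧
    (∀ m : ℕ, 4 ≤ m → Even m → ¬ACnice FC m) := by
  constructor
  · rintro m hm ⟨r, rfl⟩
    rw [← two_mul, Nat.mul_div_cancel_left r two_pos]
    exact pw_xg_ne_pw_xg_mul_xg (by omega)
  · rintro m hm ⟨r, rfl⟩ hnice
    rw [← two_mul] at hnice
    exact pw_xg_ne_pw_xg_mul_xg (by omega) (hnice.pw_eq_pw_mul_self (by omega) xg)
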